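/- arXiv:1601.00131 — 2 statements merged into one kernel-verified Lean document; each statement's English description precedes it below -/
import Mathlib

section
/- Under hypotheses (γ) and (A1), let φ : E → ℝ be defined by φ(u) = ∑_{t=1}^T [ γ₁(t)Φ₁(Δu₁(t)) + γ₂(t)Φ₂(Δu₂(t)) + γ₃(t)Φ₃(u₁(t)) + γ₄(t)Φ₄(u₂(t)) − F(t,u₁(t),u₂(t)) ]. If u = (u₁,u₂) ∈ E satisfies φ'(u) = 0, then u is a T-periodic solution of the system Δ[γ₁(t−1)φ₁(Δu₁(t−1))] − γ₃(t)φ₃(u₁(t)) + ∇_{x₁}F(t,u₁(t),u₂(t)) = 0, Δ[γ₂(t−1)φ₂(Δu₂(t−1))] − γ₄(t)φ₄(u₂(t)) + ∇_{x₂}F(t,u₁(t),u₂(t)) = 0 for all t ∈ ℤ. -/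
/- STATEMENT 5 (Lemma 4.1): under (γ) and (A1), if `u ∈ E` satisfies `φ'(u) = 0`, where
`φ(u) = ∑_{t=1}^T [γ₁Φ₁(Δu₁) + γ₂Φ₂(Δu₂) + γ₃Φ₃(u₁) + γ₄Φ₄(u₂) − F(t,u₁,u₂)]`,
then `u` solves the difference system
`Δ[γ₁(t−1)φ₁(Δu₁(t−1))] − γ₃(t)φ₃(u₁(t)) + ∇_{x₁}F(t,u₁(t),u₂(t)) = 0`,
`Δ[γ₂(t−1)φ₂(Δu₂(t−1))] − γ₄(t)φ₄(u₂(t)) + ∇_{x₂}F(t,u₁(t),u₂(t)) = 0`.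
The space `E` of pairs of `T`-periodic sequences is modelled as
`(ZMod T → ℝ^N) × (ZMod T → ℝ^N)`. -/

noncomputable section

abbrev Rn (N : ℕ) := EuclideanSpace ℝ (Fin N)

abbrev ESpace (T N : ℕ) [NeZero T] := (ZMod T → Rn N) × (ZMod T → Rn N)

/-- The functional `φ` of Lemma 4.1. -/
def actionFun (T N : ℕ) [NeZero T]
    (γ : Fin 4 → ZMod T → ℝ) (Φv : Fin 4 → Rn N → ℝ)
    (F : ZMod T → Rn N → Rn N → ℝ) (u : ESpace T N) : ℝ :=
  ∑ t : ZMod T,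
    (γ 0 t * Φv 0 (u.1 (t + 1) - u.1 t) + γ 1 t * Φv 1 (u.2 (t + 1) - u.2 t)
      + γ 2 t * Φv 2 (u.1 t) + γ 3 t * Φv 3 (u.2 t)
      - F t (u.1 t) (u.2 t))

/- The derivative of the action in a direction `h` is a sum of inner products with `h` and with
its forward difference `Δh`; reindexing `t ↦ t + 1` on `ℤ/T` (summation by parts) moves the
difference onto `u`, so that `φ'(u) h = -∑ₜ (⟪L₁u(t), h₁(t)⟫ + ⟪L₂u(t), h₂(t)⟫)`, where `L₁u`,
`L₂u` are the left-hand sides of the system. Testing `φ'(u) = 0` against `h = (L₁u, 0)` and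
`h = (0, L₂u)` forces both to vanish. -/

open Finset
open scoped RealInnerProductSpace

section

variable {G V : Type*} [Fintype G] [NormedAddCommGroup V] [InnerProductSpace ℝ V]

theorem eq_zero_of_forall_sum_inner_eq_zero {r : G → V}
    (h : ∀ x : G → V, ∑ t, ⟪r t, x t⟫ = 0) : ∀ t, r t = 0 := fun t =>
  inner_self_eq_zero.1 <|
    (sum_eq_zero_iff_of_nonneg fun _ _ => real_inner_self_nonneg).1 (h r) t (mem_univ t)

theorem sum_inner_sub_shift [AddGroup G] (a h : G → V) (c : G) :
    ∑ t, ⟪a t, h (t + c) - h t⟫ = ∑ t, ⟪a (t - c) - a t, h t⟫ := by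
  have hshift : ∑ t, ⟪a t, h (t + c)⟫ = ∑ t, ⟪a (t - c), h t⟫ :=
    Fintype.sum_equiv (Equiv.addRight c) _ _ fun t => by simp
  simp only [inner_sub_left, inner_sub_right, sum_sub_distrib, hshift]

end

/-- `Δ[a(t-1) φ(Δx(t-1))] - b(t) ψ(x(t)) + g(t)`, the left-hand side of either equation of the
system. -/
def discreteEulerLagrange {T : ℕ} {V : Type*} [NormedAddCommGroup V] [InnerProductSpace ℝ V]
    (a : ZMod T → ℝ) (φ : V → V) (b : ZMod T → ℝ) (ψ : V → V) (g : ZMod T → V)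
    (x : ZMod T → V) (t : ZMod T) : V :=
  (a t • φ (x (t + 1) - x t) - a (t - 1) • φ (x t - x (t - 1))) - b t • ψ (x t) + g t

theorem sum_inner_eq_neg_sum_inner_discreteEulerLagrange {T : ℕ} [NeZero T] {V : Type*}
    [NormedAddCommGroup V] [InnerProductSpace ℝ V]
    (a : ZMod T → ℝ) (φ : V → V) (b : ZMod T → ℝ) (ψ : V → V) (g : ZMod T → V)
    (x h : ZMod T → V) :
    ∑ t, (a t * ⟪φ (x (t + 1) - x t), h (t + 1) - h t⟫ + b t * ⟪ψ (x t), h t⟫ - ⟪g t, h t⟫) =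
      -∑ t, ⟪discreteEulerLagrange a φ b ψ g x t, h t⟫ := by
  have hparts := sum_inner_sub_shift (fun t => a t • φ (x (t + 1) - x t)) h 1
  simp only [real_inner_smul_left, sub_add_cancel] at hparts
  simp only [discreteEulerLagrange, inner_add_left, inner_sub_left, real_inner_smul_left,
    sum_add_distrib, sum_sub_distrib, hparts]
  ring

theorem fderiv_prod_apply_eq_inner_gradient {V W : Type*} [NormedAddCommGroup V]
    [InnerProductSpace ℝ V] [CompleteSpace V] [NormedAddCommGroup W] [InnerProductSpace ℝ W]
    [CompleteSpace W] {f : V × W → ℝ} {p : V × W} (hf : DifferentiableAt ℝ f p) (v : V) (w : W) :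
    fderiv ℝ f p (v, w) =
      ⟪gradient (fun y => f (y, p.2)) p.1, v⟫ + ⟪gradient (fun z => f (p.1, z)) p.2, w⟫ := by
  have h₁ : HasFDerivAt (fun y => f (y, p.2)) ((fderiv ℝ f p).comp (.inl ℝ V W)) p.1 :=
    hf.hasFDerivAt.comp p.1 (hasFDerivAt_prodMk_left p.1 p.2)
  have h₂ : HasFDerivAt (fun z => f (p.1, z)) ((fderiv ℝ f p).comp (.inr ℝ V W)) p.2 :=
    hf.hasFDerivAt.comp p.2 (hasFDerivAt_prodMk_right p.1 p.2)
  rw [inner_gradient_left, inner_gradient_left, h₁.fderiv, h₂.fderiv]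
  simp [← map_add]

theorem fderiv_actionFun_apply {T N : ℕ} [NeZero T] {γ : Fin 4 → ZMod T → ℝ}
    {φv : Fin 4 → Rn N → Rn N} {Φv : Fin 4 → Rn N → ℝ} {F : ZMod T → Rn N → Rn N → ℝ}
    (hΦ : ∀ i x, HasGradientAt (Φv i) (φv i x) x)
    (hF : ∀ t, Differentiable ℝ (fun p : Rn N × Rn N => F t p.1 p.2)) (u h : ESpace T N) :
    fderiv ℝ (actionFun T N γ Φv F) u h =
      -(∑ t, ⟪discreteEulerLagrange (γ 0) (φv 0) (γ 2) (φv 2)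
            (fun t => gradient (fun y => F t y (u.2 t)) (u.1 t)) u.1 t, h.1 t⟫ +
        ∑ t, ⟪discreteEulerLagrange (γ 1) (φv 1) (γ 3) (φv 3)
            (fun t => gradient (fun y => F t (u.1 t) y) (u.2 t)) u.2 t, h.2 t⟫) := by
  have hev₁ (t : ZMod T) : HasFDerivAt (fun u : ESpace T N => u.1 t)
      ((ContinuousLinearMap.proj t).comp (ContinuousLinearMap.fst ℝ _ _)) u :=
    (hasFDerivAt_apply t u.1).comp (g := fun x : ZMod T → Rn N => x t) u hasFDerivAt_fst
  have hev₂ (t : ZMod T) : HasFDerivAt (fun u : ESpace T N => u.2 t)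
      ((ContinuousLinearMap.proj t).comp (ContinuousLinearMap.snd ℝ _ _)) u :=
    (hasFDerivAt_apply t u.2).comp (g := fun x : ZMod T → Rn N => x t) u hasFDerivAt_snd
  have hD : HasFDerivAt (actionFun T N γ Φv F) _ u := HasFDerivAt.fun_sum fun t _ =>
    ((((((hΦ 0 _).hasFDerivAt.comp u ((hev₁ (t + 1)).sub (hev₁ t))).const_mul (γ 0 t)).add
      (((hΦ 1 _).hasFDerivAt.comp u ((hev₂ (t + 1)).sub (hev₂ t))).const_mul (γ 1 t))).add
      (((hΦ 2 _).hasFDerivAt.comp u (hev₁ t)).const_mul (γ 2 t))).add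
      (((hΦ 3 _).hasFDerivAt.comp u (hev₂ t)).const_mul (γ 3 t))).sub
      ((hF t _).hasFDerivAt.comp u ((hev₁ t).prodMk (hev₂ t)))
  rw [hD.fderiv, neg_add, ← sum_inner_eq_neg_sum_inner_discreteEulerLagrange,
    ← sum_inner_eq_neg_sum_inner_discreteEulerLagrange, _root_.sum_apply,
    ← sum_add_distrib]
  refine sum_congr rfl fun t _ => ?_
  simp only [sub_apply, add_apply, smul_apply, ContinuousLinearMap.comp_apply,
    ContinuousLinearMap.prod_apply, InnerProductSpace.toDual_apply_apply, smul_eq_mul,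
    ContinuousLinearMap.proj_apply, ContinuousLinearMap.coe_fst', ContinuousLinearMap.coe_snd',
    Pi.sub_apply, fderiv_prod_apply_eq_inner_gradient (hF t _)]
  ring

theorem critical_point_is_solution'_general (T N : ℕ) [NeZero T]
    (γ : Fin 4 → ZMod T → ℝ) (φv : Fin 4 → Rn N → Rn N) (Φv : Fin 4 → Rn N → ℝ)
    (F : ZMod T → Rn N → Rn N → ℝ)
    -- hypothesis (A1)
    (hφgrad : ∀ i, ∀ x : Rn N, φv i x = gradient (Φv i) x)
    (hΦC1 : ∀ i, ContDiff ℝ 1 (Φv i))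
    -- `F` is `C¹` in `(x₁,x₂)`
    (hFC1 : ∀ t, ContDiff ℝ 1 (fun p : Rn N × Rn N => F t p.1 p.2))
    (u : ESpace T N)
    (hu : fderiv ℝ (actionFun T N γ Φv F) u = 0) :
    (∀ t : ZMod T,
      (γ 0 t • φv 0 (u.1 (t + 1) - u.1 t) - γ 0 (t - 1) • φv 0 (u.1 t - u.1 (t - 1)))
        - γ 2 t • φv 2 (u.1 t)
        + gradient (fun y : Rn N => F t y (u.2 t)) (u.1 t) = 0)
    ∧ (∀ t : ZMod T,
      (γ 1 t • φv 1 (u.2 (t + 1) - u.2 t) - γ 1 (t - 1) • φv 1 (u.2 t - u.2 (t - 1)))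
        - γ 3 t • φv 3 (u.2 t)
        + gradient (fun y : Rn N => F t (u.1 t) y) (u.2 t) = 0) := by
  have hΦ : ∀ i x, HasGradientAt (Φv i) (φv i x) x := fun i x =>
    hφgrad i x ▸ ((hΦC1 i).differentiable one_ne_zero x).hasGradientAt
  have hvar (h : ESpace T N) := fderiv_actionFun_apply (γ := γ) hΦ
    (fun t => (hFC1 t).differentiable one_ne_zero) u h
  simp only [hu, zero_apply, zero_eq_neg] at hvar
  constructor <;> apply eq_zero_of_forall_sum_inner_eq_zero <;> intro x
  · simpa [discreteEulerLagrange] using hvar (x, 0)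
  · simpa [discreteEulerLagrange] using hvar (0, x)

theorem critical_point_is_solution' (T N : ℕ) [NeZero T] (hT : 1 < T) (hN : 0 < N)
    (γ : Fin 4 → ZMod T → ℝ) (φv : Fin 4 → Rn N → Rn N) (Φv : Fin 4 → Rn N → ℝ)
    (F : ZMod T → Rn N → Rn N → ℝ)
    -- hypothesis (γ)
    (hγpos : ∀ i t, 0 < γ i t)
    -- hypothesis (A1)
    (hφhomeo : ∀ i, IsHomeomorph (φv i))
    (hφzero : ∀ i, φv i 0 = 0)
    (hφgrad : ∀ i, ∀ x : Rn N, φv i x = gradient (Φv i) x)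
    (hΦC1 : ∀ i, ContDiff ℝ 1 (Φv i))
    (hΦnonneg : ∀ i, ∀ x : Rn N, 0 ≤ Φv i x)
    (hΦconv : ∀ i, StrictConvexOn ℝ Set.univ (Φv i))
    (hΦzero : ∀ i, Φv i 0 = 0)
    -- `F` is `C¹` in `(x₁,x₂)`
    (hFC1 : ∀ t, ContDiff ℝ 1 (fun p : Rn N × Rn N => F t p.1 p.2))
    (u : ESpace T N)
    (hu : fderiv ℝ (actionFun T N γ Φv F) u = 0) :
    (∀ t : ZMod T,
      (γ 0 t • φv 0 (u.1 (t + 1) - u.1 t) - γ 0 (t - 1) • φv 0 (u.1 t - u.1 (t - 1)))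
        - γ 2 t • φv 2 (u.1 t)
        + gradient (fun y : Rn N => F t y (u.2 t)) (u.1 t) = 0)
    ∧ (∀ t : ZMod T,
      (γ 1 t • φv 1 (u.2 (t + 1) - u.2 t) - γ 1 (t - 1) • φv 1 (u.2 t - u.2 (t - 1)))
        - γ 3 t • φv 3 (u.2 t)
        + gradient (fun y : Rn N => F t (u.1 t) y) (u.2 t) = 0) :=
  critical_point_is_solution'_general T N γ φv Φv F hφgrad hΦC1 hFC1 u hu
end
end

section
/- Under hypotheses (ρ) and (A3), for all u = (u₁,u₂), v = (v₁,v₂) ∈ E: ∑_{t=1}^T [ ρ₁(t)(φ₁(Δu₁(t)) − φ₁(Δv₁(t)), Δu₁(t) − Δv₁(t)) + ρ₂(t)(φ₂(Δu₂(t)) − φ₂(Δv₂(t)), Δu₂(t) − Δv₂(t)) + ρ₃(t)(φ₃(u₁(t)) − φ₃(v₁(t)), u₁(t) − v₁(t)) + ρ₄(t)(φ₄(u₂(t)) − φ₄(v₂(t)), u₂(t) − v₂(t)) ] ≥ (1/2^{θ−1}) · min{c₁ρ₁⁻, c₂ρ₂⁻, c₃ρ₃⁻, c₄ρ₄⁻}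 · ‖u − v‖^θ, where ρ_i⁻ = min_{t∈ℤ[1,T]} ρ_i(t). In particular the derivative I' of the functional I is uniformly monotone on E. -/
/- STATEMENT 9: under (ρ) and (A3), for all `u, v ∈ E`,
`∑_{t=1}^T [ρ₁(t)(φ₁(Δu₁)−φ₁(Δv₁), Δu₁−Δv₁) + ρ₂(t)(φ₂(Δu₂)−φ₂(Δv₂), Δu₂−Δv₂)
 + ρ₃(t)(φ₃(u₁)−φ₃(v₁), u₁−v₁) + ρ₄(t)(φ₄(u₂)−φ₄(v₂), u₂−v₂)]
 ≥ (1/2^{θ−1})·min{c₁ρ₁⁻, c₂ρ₂⁻, c₃ρ₃⁻, c₄ρ₄⁻}·‖u−v‖^θ`,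
where `ρᵢ⁻ = min_{t∈ℤ[1,T]} ρᵢ(t)`  (uniform monotonicity of `I'`). -/

open scoped RealInnerProductSpace

noncomputable section

/-- `u : ℤ → ℝ^N` is `T`-periodic. -/
def IsPeriodic (N : ℕ) (T : ℕ) (u : ℤ → Rn N) : Prop := ∀ t : ℤ, u (t + T) = u t

/-- Forward difference. -/
def fdiff (N : ℕ) (u : ℤ → Rn N) (t : ℤ) : Rn N := u (t + 1) - u t

/-- The norm `‖·‖_{E_T}`. -/
def normET (N T : ℕ) (θ : ℝ) (u : ℤ → Rn N) : ℝ :=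
  (∑ t ∈ Finset.Icc (1 : ℤ) (T : ℤ), ‖fdiff N u t‖ ^ θ +
    ∑ t ∈ Finset.Icc (1 : ℤ) (T : ℤ), ‖u t‖ ^ θ) ^ (1 / θ)

/-- The norm `‖u‖ = ‖u₁‖_{E_T} + ‖u₂‖_{E_T}` on `E`. -/
def normE (N T : ℕ) (θ : ℝ) (u : (ℤ → Rn N) × (ℤ → Rn N)) : ℝ :=
  normET N T θ u.1 + normET N T θ u.2

/-- `min_{t ∈ ℤ[1,T]} f(t)` (for `T ≥ 1`). -/
def minIcc (T : ℕ) (hT : 1 ≤ T) (f : ℤ → ℝ) : ℝ :=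
  (Finset.Icc (1 : ℤ) (T : ℤ)).inf' (Finset.nonempty_Icc.mpr (by exact_mod_cast hT)) f

/-! Apply (A3) to each of the four terms, bound the weights `ρᵢ(t)` below by `ρᵢ⁻` and the constants
`cᵢρᵢ⁻` by their minimum, so the sum dominates `min{cᵢρᵢ⁻}` times `X + Y`, where `X` and `Y` are the
`θ`-th powers of `‖u₁ − v₁‖_{E_T}` and `‖u₂ − v₂‖_{E_T}`. Convexity of `s ↦ s^θ` gives
`(X^{1/θ} + Y^{1/θ})^θ ≤ 2^{θ−1}(X + Y)`, which accounts for the factor `1/2^{θ−1}`. -/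

open Finset

lemma Real.rpow_add_le_mul_rpow_add_rpow {a b p : ℝ} (ha : 0 ≤ a) (hb : 0 ≤ b) (hp : 1 ≤ p) :
    (a + b) ^ p ≤ 2 ^ (p - 1) * (a ^ p + b ^ p) := by
  lift a to NNReal using ha
  lift b to NNReal using hb
  exact_mod_cast NNReal.rpow_add_le_mul_rpow_add_rpow a b hp

lemma Real.rpow_one_div_add_rpow_one_div_rpow_le {a b p : ℝ} (ha : 0 ≤ a) (hb : 0 ≤ b)
    (hp : 1 ≤ p) : (a ^ (1 / p) + b ^ (1 / p)) ^ p ≤ 2 ^ (p - 1) * (a + b) := by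
  have hp0 : p ≠ 0 := by positivity
  simpa only [one_div, Real.rpow_inv_rpow ha hp0, Real.rpow_inv_rpow hb hp0] using
    Real.rpow_add_le_mul_rpow_add_rpow (Real.rpow_nonneg ha (1 / p))
      (Real.rpow_nonneg hb (1 / p)) hp

lemma mul_rpow_le_mul_inner_of_strongly_monotone {E : Type*} [NormedAddCommGroup E]
    [InnerProductSpace ℝ E] {φ : E → E} {c r m θ : ℝ} (hr : 0 ≤ r)
    (hm : m ≤ c * r) (hφ : ∀ x y, c * ‖x - y‖ ^ θ ≤ ⟪φ x - φ y, x - y⟫) (x y : E) :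
    m * ‖x - y‖ ^ θ ≤ r * ⟪φ x - φ y, x - y⟫ :=
  calc m * ‖x - y‖ ^ θ ≤ c * r * ‖x - y‖ ^ θ := by gcongr
    _ = r * (c * ‖x - y‖ ^ θ) := by ring
    _ ≤ r * ⟪φ x - φ y, x - y⟫ := by gcongr; exact hφ x y

section

variable {N T : ℕ}

lemma minIcc_le {hT : 1 ≤ T} (f : ℤ → ℝ) {t : ℤ} (ht : t ∈ Icc (1 : ℤ) T) :
    minIcc T hT f ≤ f t :=
  inf'_le f ht

lemma minIcc_pos {hT : 1 ≤ T} {f : ℤ → ℝ} (hf : ∀ t ∈ Icc (1 : ℤ) T, 0 < f t) :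
    0 < minIcc T hT f :=
  (lt_inf'_iff _).2 hf

lemma fdiff_sub (u v : ℤ → Rn N) (t : ℤ) : fdiff N (u - v) t = fdiff N u t - fdiff N v t := by
  simp only [fdiff, Pi.sub_apply]
  abel

lemma normE_rpow_le {θ : ℝ} (hθ : 1 ≤ θ) (w : (ℤ → Rn N) × (ℤ → Rn N)) :
    normE N T θ w ^ θ ≤ 2 ^ (θ - 1) * ∑ t ∈ Icc (1 : ℤ) T,
      (‖fdiff N w.1 t‖ ^ θ + ‖fdiff N w.2 t‖ ^ θ + ‖w.1 t‖ ^ θ + ‖w.2 t‖ ^ θ) := by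
  have hsum_nonneg : ∀ z : ℤ → Rn N, 0 ≤ ∑ t ∈ Icc (1 : ℤ) T, ‖fdiff N z t‖ ^ θ +
      ∑ t ∈ Icc (1 : ℤ) T, ‖z t‖ ^ θ := fun z => by positivity
  convert Real.rpow_one_div_add_rpow_one_div_rpow_le (hsum_nonneg w.1) (hsum_nonneg w.2) hθ
    using 2
  · rfl
  · simp only [sum_add_distrib]
    ring

end

theorem uniform_monotonicity_general (T N : ℕ) (hT : 1 < T)
    (ρ : Fin 4 → ℤ → ℝ) (φv : Fin 4 → Rn N → Rn N)
    (θ : ℝ) (c : Fin 4 → ℝ) (hθ : 1 < θ) (hc : ∀ i, 0 < c i)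
    -- hypothesis (ρ)
    (hρpos : ∀ i, ∀ t ∈ Finset.Icc (1 : ℤ) (T : ℤ), 0 < ρ i t)
    -- hypothesis (A3)
    (hA3 : ∀ i, ∀ x y : Rn N, c i * ‖x - y‖ ^ θ ≤ ⟪φv i x - φv i y, x - y⟫)
    (u v : (ℤ → Rn N) × (ℤ → Rn N)) :
    (1 / (2 : ℝ) ^ (θ - 1)) *
        min (min (c 0 * minIcc T hT.le (ρ 0)) (c 1 * minIcc T hT.le (ρ 1)))
            (min (c 2 * minIcc T hT.le (ρ 2)) (c 3 * minIcc T hT.le (ρ 3))) *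
        normE N T θ (u - v) ^ θ
      ≤ ∑ t ∈ Finset.Icc (1 : ℤ) (T : ℤ),
          (ρ 0 t * ⟪φv 0 (fdiff N u.1 t) - φv 0 (fdiff N v.1 t), fdiff N u.1 t - fdiff N v.1 t⟫
            + ρ 1 t * ⟪φv 1 (fdiff N u.2 t) - φv 1 (fdiff N v.2 t), fdiff N u.2 t - fdiff N v.2 t⟫
            + ρ 2 t * ⟪φv 2 (u.1 t) - φv 2 (v.1 t), u.1 t - v.1 t⟫
            + ρ 3 t * ⟪φv 3 (u.2 t) - φv 3 (v.2 t), u.2 t - v.2 t⟫) := by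
  set m := min (min (c 0 * minIcc T hT.le (ρ 0)) (c 1 * minIcc T hT.le (ρ 1)))
    (min (c 2 * minIcc T hT.le (ρ 2)) (c 3 * minIcc T hT.le (ρ 3)))
  have hm : 0 ≤ m := by
    have h := fun i => (mul_pos (hc i) (minIcc_pos (hT := hT.le) (hρpos i))).le
    exact le_min (le_min (h 0) (h 1)) (le_min (h 2) (h 3))
  have term : ∀ i, m ≤ c i * minIcc T hT.le (ρ i) → ∀ t ∈ Icc (1 : ℤ) T, ∀ x y,
      m * ‖x - y‖ ^ θ ≤ ρ i t * ⟪φv i x - φv i y, x - y⟫ := fun i hmi t ht =>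
    mul_rpow_le_mul_inner_of_strongly_monotone (hρpos i t ht).le
      (hmi.trans (by gcongr; exacts [(hc i).le, minIcc_le _ ht])) (hA3 i)
  calc (1 / (2 : ℝ) ^ (θ - 1)) * m * normE N T θ (u - v) ^ θ
      ≤ (1 / (2 : ℝ) ^ (θ - 1)) * m * (2 ^ (θ - 1) * ∑ t ∈ Icc (1 : ℤ) T,
          (‖fdiff N u.1 t - fdiff N v.1 t‖ ^ θ + ‖fdiff N u.2 t - fdiff N v.2 t‖ ^ θ
            + ‖u.1 t - v.1 t‖ ^ θ + ‖u.2 t - v.2 t‖ ^ θ)) := by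
        gcongr
        simpa only [Prod.fst_sub, Prod.snd_sub, fdiff_sub, Pi.sub_apply] using
          normE_rpow_le hθ.le (u - v)
    _ = ∑ t ∈ Icc (1 : ℤ) T,
          (m * ‖fdiff N u.1 t - fdiff N v.1 t‖ ^ θ + m * ‖fdiff N u.2 t - fdiff N v.2 t‖ ^ θ
            + m * ‖u.1 t - v.1 t‖ ^ θ + m * ‖u.2 t - v.2 t‖ ^ θ) := by
        rw [mul_sum, mul_sum]
        refine sum_congr rfl fun t _ => ?_
        field_simp
    _ ≤ _ := sum_le_sum fun t ht => by
        gcongr ?_ + ?_ + ?_ + ?_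
        · exact term 0 ((min_le_left _ _).trans (min_le_left _ _)) t ht _ _
        · exact term 1 ((min_le_left _ _).trans (min_le_right _ _)) t ht _ _
        · exact term 2 ((min_le_right _ _).trans (min_le_left _ _)) t ht _ _
        · exact term 3 ((min_le_right _ _).trans (min_le_right _ _)) t ht _ _

theorem uniform_monotonicity (T N : ℕ) (hT : 1 < T)
    (ρ : Fin 4 → ℤ → ℝ) (φv : Fin 4 → Rn N → Rn N)
    (θ : ℝ) (c : Fin 4 → ℝ) (hθ : 1 < θ) (hc : ∀ i, 0 < c i)
    -- hypothesis (ρ)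
    (hρper : ∀ i, ∀ t : ℤ, ρ i (t + T) = ρ i t)
    (hρpos : ∀ i, ∀ t ∈ Finset.Icc (1 : ℤ) (T : ℤ), 0 < ρ i t)
    -- hypothesis (A3)
    (hA3 : ∀ i, ∀ x y : Rn N, c i * ‖x - y‖ ^ θ ≤ ⟪φv i x - φv i y, x - y⟫)
    (u v : (ℤ → Rn N) × (ℤ → Rn N))
    (hu₁ : IsPeriodic N T u.1) (hu₂ : IsPeriodic N T u.2)
    (hv₁ : IsPeriodic N T v.1) (hv₂ : IsPeriodic N T v.2) :
    (1 / (2 : ℝ) ^ (θ - 1)) *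
        min (min (c 0 * minIcc T hT.le (ρ 0)) (c 1 * minIcc T hT.le (ρ 1)))
            (min (c 2 * minIcc T hT.le (ρ 2)) (c 3 * minIcc T hT.le (ρ 3))) *
        normE N T θ (u - v) ^ θ
      ≤ ∑ t ∈ Finset.Icc (1 : ℤ) (T : ℤ),
          (ρ 0 t * ⟪φv 0 (fdiff N u.1 t) - φv 0 (fdiff N v.1 t), fdiff N u.1 t - fdiff N v.1 t⟫
            + ρ 1 t * ⟪φv 1 (fdiff N u.2 t) - φv 1 (fdiff N v.2 t), fdiff N u.2 t - fdiff N v.2 t⟫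
            + ρ 2 t * ⟪φv 2 (u.1 t) - φv 2 (v.1 t), u.1 t - v.1 t⟫
            + ρ 3 t * ⟪φv 3 (u.2 t) - φv 3 (v.2 t), u.2 t - v.2 t⟫) :=
  uniform_monotonicity_general T N hT ρ φv θ c hθ hc hρpos hA3 u v
end
end
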